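/- The one-step difference of the SIS infection count satisfies the drift identity: E[J_{t+1} - J_t | S_t = s, J_t = j] = s(1-(1-p)^j) - j, and when p = 1/N and s = N - j this equals -(1 - (N-j)/N·(1-(1-1/N)^j)/ (j/N))·j; in particular for p=1/N, E[J_{t+1} | S_t = N-j, J_t = j] ≤ j - j²/N + j²·(j-1)p²·N/2, exhibiting the quadratic attrition term of order j²/N. -/
import Mathlib

lemma binom_mean (s : ℕ) (x y : ℝ) :
    (∑ k ∈ Finset.range (s + 1), (k : ℝ) * (s.choose k) * x ^ k * y ^ (s - k))
      = (s : ℝ) * x * (x + y) ^ (s - 1) := by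
  cases s with
  | zero => simp
  | succ s =>
    rw [Finset.sum_range_succ']
    simp only [Nat.cast_zero, zero_mul, mul_zero, zero_mul, add_zero]
    have key : ∀ k ∈ Finset.range (s + 1),
        ((k + 1 : ℕ) : ℝ) * ((s + 1).choose (k + 1)) * x ^ (k + 1) * y ^ (s + 1 - (k + 1))
          = ((s : ℝ) + 1) * x * ((s.choose k : ℝ) * x ^ k * y ^ (s - k)) := by
      intro k _
      have h := Nat.add_one_mul_choose_eq s k
      have h' : ((s + 1 : ℕ) : ℝ) * (s.choose k : ℝ) = ((s + 1).choose (k + 1) : ℝ) * ((k + 1 : ℕ) : ℝ) := by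
        exact_mod_cast congrArg (Nat.cast (R := ℝ)) h
      push_cast at h' ⊢
      linear_combination (-(x ^ (k + 1) * y ^ (s - k))) * h'
    rw [Finset.sum_congr rfl key, ← Finset.mul_sum]
    have hb : (∑ k ∈ Finset.range (s + 1), (s.choose k : ℝ) * x ^ k * y ^ (s - k)) = (x + y) ^ s := by
      rw [add_pow]
      exact Finset.sum_congr rfl fun k _ => by ring
    rw [hb]
    push_cast
    ring

/-- SIS drift identity: conditional on `J_t = j` and `S_t = s`,
`J_{t+1} ~ Binomial(s, q)` with `q = 1 - (1-p)^j`, so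
`E[J_{t+1} - J_t | S_t = s, J_t = j] = s(1-(1-p)^j) - j`. Moreover for `p = 1/N`
and `s = N - j`, the conditional mean is at most
`j - j²/N + j²(j-1)p²N/2`, exhibiting the quadratic attrition term of order `j²/N`. -/
theorem sis_drift_identity (N s j : ℕ) (hN : 0 < N) (hjN : j ≤ N)
    (p : ℝ) (hp0 : 0 ≤ p) (hp1 : p ≤ 1) :
    ((∑ k ∈ Finset.range (s + 1),
        (k : ℝ) * (s.choose k) * (1 - (1 - p) ^ j) ^ k * ((1 - p) ^ j) ^ (s - k))
        - (j : ℝ)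
      = (s : ℝ) * (1 - (1 - p) ^ j) - (j : ℝ))
    ∧ (p = 1 / N → s = N - j →
        (∑ k ∈ Finset.range (s + 1),
            (k : ℝ) * (s.choose k) * (1 - (1 - p) ^ j) ^ k * ((1 - p) ^ j) ^ (s - k))
          ≤ (j : ℝ) - (j : ℝ) ^ 2 / N + (j : ℝ) ^ 2 * ((j : ℝ) - 1) * p ^ 2 * N / 2) := by
  set q : ℝ := 1 - (1 - p) ^ j with hq
  have hsum : (∑ k ∈ Finset.range (s + 1),
      (k : ℝ) * (s.choose k) * q ^ k * ((1 - p) ^ j) ^ (s - k)) = (s : ℝ) * q := by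
    have := binom_mean s q ((1 - p) ^ j)
    rw [this]
    have : q + (1 - p) ^ j = 1 := by rw [hq]; ring
    rw [this, one_pow, mul_one]
  constructor
  · rw [hsum]
  · intro hpN hsj
    rw [hsum]
    have hq0 : 0 ≤ q := by
      have h1 : (1 - p) ^ j ≤ 1 := pow_le_one₀ (by linarith) (by linarith)
      rw [hq]; linarith
    have hqle : q ≤ (j : ℝ) * p := by
      have hb : 1 + (j : ℝ) * (-p) ≤ (1 + (-p)) ^ j :=
        one_add_mul_le_pow (by linarith) j
      rw [hq]
      have : (1 + -p) = 1 - p := by ring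
      rw [this] at hb
      linarith
    have hNr : (0 : ℝ) < N := by exact_mod_cast hN
    have hscast : (s : ℝ) = (N : ℝ) - (j : ℝ) := by
      rw [hsj]; push_cast [hjN]; ring
    have hsnn : (0 : ℝ) ≤ (N : ℝ) - (j : ℝ) := by
      have : (j : ℝ) ≤ N := by exact_mod_cast hjN
      linarith
    have h1 : (s : ℝ) * q ≤ ((N : ℝ) - j) * ((j : ℝ) * p) := by
      rw [hscast]
      exact mul_le_mul_of_nonneg_left hqle hsnn
    have heq : ((N : ℝ) - j) * ((j : ℝ) * p) = (j : ℝ) - (j : ℝ) ^ 2 / N := by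
      rw [hpN]
      field_simp
    have hextra : 0 ≤ (j : ℝ) ^ 2 * ((j : ℝ) - 1) * p ^ 2 * N / 2 := by
      rcases Nat.eq_zero_or_pos j with hj0 | hj1
      · simp [hj0]
      · have h2 : (0 : ℝ) ≤ (j : ℝ) - 1 := by
          have : (1 : ℝ) ≤ j := by exact_mod_cast hj1
          linarith
        have := mul_nonneg (mul_nonneg (mul_nonneg (sq_nonneg (j : ℝ)) h2) (sq_nonneg p)) hNr.le
        linarith
    linarith [h1, heq ▸ h1]
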